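/- Let a¹,…,aⁿ ∈ R^d, τ > 0, and initial points v¹_{-1},…,vⁿ_{-1} ∈ R^d. Define vⁱ_k = vⁱ_{k-1} + clip_τ(aⁱ − vⁱ_{k-1}) for each i and k ≥ 0, and let v_k = (1/n)∑ᵢ vⁱ_k and a = (1/n)∑ᵢ aⁱ. Then for all k ≥ 0, ‖v_k − a‖ ≤ (1/n)∑ᵢ max{0, ‖vⁱ_{-1} − aⁱ‖ − (k+1)τ}. In particular, if ‖vⁱ_{-1} − aⁱ‖ ≤ τ for all i, then v_0 = a. -/

import Mathlib

/-!
Clipping removes exactly `τ` from the norm of a residual that exceeds `τ` and zeroes any other,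
so each worker's error `‖vⁱ_k - aⁱ‖` equals `max 0 (‖vⁱ_{-1} - aⁱ‖ - (k + 1) τ)` exactly;
the triangle inequality then bounds the error of the average by the average of these errors.
-/

noncomputable def clip {E : Type*} [NormedAddCommGroup E] [NormedSpace ℝ E]
    (τ : ℝ) (x : E) : E := if ‖x‖ ≤ τ then x else (τ / ‖x‖) • x

section Clip

variable {E : Type*} [NormedAddCommGroup E] [NormedSpace ℝ E] {τ : ℝ}

theorem norm_sub_clip (hτ : 0 ≤ τ) (x : E) : ‖x - clip τ x‖ = max 0 (‖x‖ - τ) := by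
  unfold clip
  split_ifs with hx
  · simp [hx]
  · push Not at hx
    have hx₀ : 0 < ‖x‖ := hτ.trans_lt hx
    have hfactor : x - (τ / ‖x‖) • x = (1 - τ / ‖x‖) • x := by rw [sub_smul, one_smul]
    have hcoef : 0 ≤ 1 - τ / ‖x‖ := sub_nonneg.mpr ((div_le_one hx₀).mpr hx.le)
    rw [hfactor, norm_smul, Real.norm_of_nonneg hcoef, max_eq_right (by linarith)]
    field_simp

theorem norm_add_clip_sub_sub (hτ : 0 ≤ τ) (w a : E) :
    ‖w + clip τ (a - w) - a‖ = max 0 (‖w - a‖ - τ) := by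
  rw [norm_sub_rev w a, ← norm_sub_clip hτ, ← norm_neg]
  congr 1
  abel

theorem max_zero_sub_max_zero_sub {r s t : ℝ} (ht : 0 ≤ t) :
    max 0 (max 0 (r - s) - t) = max 0 (r - (s + t)) := by
  rcases le_total (r - s) 0 with h | h
  · rw [max_eq_left h, max_eq_left (by linarith), max_eq_left (by linarith)]
  · rw [max_eq_right h, sub_sub]

theorem norm_clip_iterate_sub (hτ : 0 ≤ τ) {w a : E} {u : ℕ → E}
    (h0 : u 0 = w + clip τ (a - w)) (hsucc : ∀ k, u (k + 1) = u k + clip τ (a - u k))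
    (k : ℕ) : ‖u k - a‖ = max 0 (‖w - a‖ - (k + 1) * τ) := by
  induction k with
  | zero => rw [h0, norm_add_clip_sub_sub hτ]; simp
  | succ k ih =>
    rw [hsucc, norm_add_clip_sub_sub hτ, ih, max_zero_sub_max_zero_sub hτ]
    push_cast
    ring_nf

end Clip

theorem norm_smul_sum_sub_smul_sum_le {ι E : Type*} [Fintype ι] [SeminormedAddCommGroup E]
    [NormedSpace ℝ E] {c : ℝ} (hc : 0 ≤ c) (x y : ι → E) :
    ‖c • ∑ i, x i - c • ∑ i, y i‖ ≤ c * ∑ i, ‖x i - y i‖ := by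
  rw [← smul_sub, ← Finset.sum_sub_distrib, norm_smul, Real.norm_of_nonneg hc]
  exact mul_le_mul_of_nonneg_left (norm_sum_le _ _) hc

theorem clip21_avg_general {d n : ℕ} (τ : ℝ) (hτ : 0 < τ)
    (a vinit : Fin n → EuclideanSpace ℝ (Fin d))
    (v : ℕ → Fin n → EuclideanSpace ℝ (Fin d))
    (h0 : ∀ i, v 0 i = vinit i + clip τ (a i - vinit i))
    (hrec : ∀ (k : ℕ) (i : Fin n), v (k + 1) i = v k i + clip τ (a i - v k i)) :
    (∀ k : ℕ, ‖(n : ℝ)⁻¹ • ∑ i, v k i - (n : ℝ)⁻¹ • ∑ i, a i‖ ≤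
      (n : ℝ)⁻¹ * ∑ i, max 0 (‖vinit i - a i‖ - (k + 1) * τ)) ∧
    ((∀ i, ‖vinit i - a i‖ ≤ τ) →
      (n : ℝ)⁻¹ • ∑ i, v 0 i = (n : ℝ)⁻¹ • ∑ i, a i) := by
  have hdist (k : ℕ) (i : Fin n) : ‖v k i - a i‖ = max 0 (‖vinit i - a i‖ - (k + 1) * τ) :=
    norm_clip_iterate_sub hτ.le (u := fun k => v k i) (h0 i) (fun k => hrec k i) k
  have hbound (k : ℕ) : ‖(n : ℝ)⁻¹ • ∑ i, v k i - (n : ℝ)⁻¹ • ∑ i, a i‖ ≤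
      (n : ℝ)⁻¹ * ∑ i, max 0 (‖vinit i - a i‖ - (k + 1) * τ) := by
    simpa only [hdist] using norm_smul_sum_sub_smul_sum_le (by positivity) (v k) a
  refine ⟨hbound, fun hinit => sub_eq_zero.mp (norm_le_zero_iff.mp ?_)⟩
  have hzero (i : Fin n) : max 0 (‖vinit i - a i‖ - ((0 : ℕ) + 1) * τ) = 0 := by
    simpa using hinit i
  simpa only [hzero, Finset.sum_const_zero, mul_zero] using hbound 0

theorem clip21_avg {d n : ℕ} (hn : 0 < n) (τ : ℝ) (hτ : 0 < τ)
    (a vinit : Fin n → EuclideanSpace ℝ (Fin d))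
    (v : ℕ → Fin n → EuclideanSpace ℝ (Fin d))
    (h0 : ∀ i, v 0 i = vinit i + clip τ (a i - vinit i))
    (hrec : ∀ (k : ℕ) (i : Fin n), v (k + 1) i = v k i + clip τ (a i - v k i)) :
    (∀ k : ℕ, ‖(n : ℝ)⁻¹ • ∑ i, v k i - (n : ℝ)⁻¹ • ∑ i, a i‖ ≤
      (n : ℝ)⁻¹ * ∑ i, max 0 (‖vinit i - a i‖ - (k + 1) * τ)) ∧
    ((∀ i, ‖vinit i - a i‖ ≤ τ) →
      (n : ℝ)⁻¹ • ∑ i, v 0 i = (n : ℝ)⁻¹ • ∑ i, a i) :=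
  clip21_avg_general τ hτ a vinit v h0 hrec
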